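/- Let 𝒥 be a noetherian reduction structure with disjoint cones whose ordering function φ is stable, and let F be a marked set over 𝒥. Then the following are equivalent: (a) F is a marked basis; (b) for all x^α, x^{α'} ∈ M with lcm(x^α, x^{α'}) ∈ cone(x^{α'}), every reduced l with S(f_{α'}, f_α) →_* l equals 0; (c) for all x^α, x^{α'} ∈ M and x^γ with x^{γ+α} = lcm(x^α, x^{α'}) ∈ cone(x^{α'}), every reduced l with x^γ f_α →_* l equals 0. -/

import Mathlib

open MvPolynomial

/-- Terms (monomials) in `n` variables, identified with their exponent vectors. -/
abbrev Term (n : ℕ) := Fin n →₀ ℕ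

/-- A reduction structure `𝒥 = (M, λ, τ)`. -/
structure RedStruct (n : ℕ) where
  M : Finset (Term n)
  tau : Term n → Set (Term n)
  lam : Term n → Finset (Term n)
  tau_orderIdeal : ∀ α ∈ M, ∀ η ∈ tau α, ∀ η' : Term n, η' ≤ η → η' ∈ tau α
  cover : ∀ β : Term n, (∃ α ∈ M, ∃ η, β = α + η) ↔ (∃ α ∈ M, ∃ η ∈ tau α, β = α + η)
  lam_tail : ∀ α ∈ M, ∀ γ ∈ lam α, ¬ ∃ η ∈ tau α, γ = α + η

namespace RedStruct

variable {n : ℕ}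

/-- The cone of `x^α`. -/
def cone (𝒥 : RedStruct n) (α : Term n) : Set (Term n) := {β | ∃ η ∈ 𝒥.tau α, β = α + η}

/-- The semigroup ideal `J` generated by `M`. -/
def idealJ (𝒥 : RedStruct n) : Set (Term n) := {β | ∃ α ∈ 𝒥.M, ∃ η, β = α + η}

def hasMaximalCones (𝒥 : RedStruct n) : Prop := ∀ α ∈ 𝒥.M, 𝒥.tau α = Set.univ

def hasDisjointCones (𝒥 : RedStruct n) : Prop :=
  ∀ α ∈ 𝒥.M, ∀ α' ∈ 𝒥.M, α ≠ α' → 𝒥.cone α ∩ 𝒥.cone α' = ∅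

/-- `𝒥'` is a substructure of `𝒥`: same `M`, same tails, smaller multiplicative sets. -/
def IsSubstructure (𝒥' 𝒥 : RedStruct n) : Prop :=
  𝒥'.M = 𝒥.M ∧ 𝒥'.lam = 𝒥.lam ∧ ∀ α ∈ 𝒥.M, 𝒥'.tau α ⊆ 𝒥.tau α

/-- An ordered reduction structure: there are a well-founded strictly (partially) ordered set
`(W, ≺)` and an ordering function `φ` with `φ(x^{γ+η}) ≺ φ(x^{α+η})` for all `x^α ∈ M`,
`x^γ ∈ λ_α`, `x^η ∈ τ_α`. -/
def IsOrdered (𝒥 : RedStruct n) : Prop :=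
  ∃ (W : Type) (lt : W → W → Prop) (φ : Term n → W),
    IsStrictOrder W lt ∧ WellFounded lt ∧
      ∀ α ∈ 𝒥.M, ∀ γ ∈ 𝒥.lam α, ∀ η ∈ 𝒥.tau α, lt (φ (γ + η)) (φ (α + η))

end RedStruct

variable {n : ℕ}

/-- A marked set on `𝒥` over the ring `A`: each `f_α = x^α + Σ_{γ ∈ λ_α} c γ x^γ`. -/
def IsMarkedSet {A : Type*} [CommRing A] (𝒥 : RedStruct n)
    (F : Term n → MvPolynomial (Fin n) A) : Prop :=
  ∀ α ∈ 𝒥.M, MvPolynomial.coeff α (F α) = 1 ∧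
    ∀ β : Term n, MvPolynomial.coeff β (F α) ≠ 0 → β = α ∨ β ∈ 𝒥.lam α

/-- One base step of reduction, allowing multipliers from the family `σ`. -/
def RedStep {A : Type*} [CommRing A] (𝒥 : RedStruct n) (σ : Term n → Set (Term n))
    (F : Term n → MvPolynomial (Fin n) A) (g h : MvPolynomial (Fin n) A) : Prop :=
  ∃ α ∈ 𝒥.M, ∃ η ∈ σ α, MvPolynomial.coeff (α + η) g ≠ 0 ∧
    h = g - MvPolynomial.monomial η (MvPolynomial.coeff (α + η) g) * F α

/-- The reduction relation `→_{F𝒥}`. -/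
def Red {A : Type*} [CommRing A] (𝒥 : RedStruct n) (F : Term n → MvPolynomial (Fin n) A) :
    MvPolynomial (Fin n) A → MvPolynomial (Fin n) A → Prop :=
  RedStep 𝒥 𝒥.tau F

/-- The reflexive-transitive closure `→_*` of `→_{F𝒥}`. -/
def RedStar {A : Type*} [CommRing A] (𝒥 : RedStruct n) (F : Term n → MvPolynomial (Fin n) A) :
    MvPolynomial (Fin n) A → MvPolynomial (Fin n) A → Prop :=
  Relation.ReflTransGen (Red 𝒥 F)

/-- A polynomial is reduced if its support is contained in `N(J)`. -/
def IsReducedPoly {A : Type*} [CommRing A] (𝒥 : RedStruct n)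
    (l : MvPolynomial (Fin n) A) : Prop :=
  ∀ β ∈ l.support, β ∉ 𝒥.idealJ

/-- A relation is noetherian: there is no infinite chain of steps. -/
def RelNoetherian {X : Type*} (r : X → X → Prop) : Prop :=
  ¬ ∃ f : ℕ → X, ∀ i, r (f i) (f (i + 1))

/-- `𝒥` is noetherian over `A`: for every marked set `F` on `𝒥` over `A`, every sequence
of `→_{F𝒥}` reduction steps terminates. -/
def RedStruct.IsNoetherianOver (𝒥 : RedStruct n) (A : Type*) [CommRing A] : Prop :=
  ∀ F : Term n → MvPolynomial (Fin n) A, IsMarkedSet 𝒥 F → RelNoetherian (Red 𝒥 F)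

/-- `𝒥` is weakly noetherian over `A`: it has a noetherian substructure. -/
def RedStruct.IsWeaklyNoetherianOver (𝒥 : RedStruct n) (A : Type*) [CommRing A] : Prop :=
  ∃ 𝒥' : RedStruct n, RedStruct.IsSubstructure 𝒥' 𝒥 ∧ 𝒥'.IsNoetherianOver A

/-- The set `σF = {x^η f_α : x^α ∈ M, x^η ∈ σ_α}`. -/
def tauF {A : Type*} [CommRing A] (𝒥 : RedStruct n) (σ : Term n → Set (Term n))
    (F : Term n → MvPolynomial (Fin n) A) : Set (MvPolynomial (Fin n) A) :=
  {p | ∃ α ∈ 𝒥.M, ∃ η ∈ σ α, p = MvPolynomial.monomial η (1 : A) * F α}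

/-- The `A`-submodule `⟨σF⟩` generated by `σF`. -/
noncomputable def tauSpan {A : Type*} [CommRing A] (𝒥 : RedStruct n) (σ : Term n → Set (Term n))
    (F : Term n → MvPolynomial (Fin n) A) : Submodule A (MvPolynomial (Fin n) A) :=
  Submodule.span A (tauF 𝒥 σ F)

/-- The `A`-submodule `⟨N(J)⟩` spanned by the terms outside `J`. -/
noncomputable def NJSpan (𝒥 : RedStruct n) (A : Type*) [CommRing A] :
    Submodule A (MvPolynomial (Fin n) A) :=
  Submodule.span A {p | ∃ β ∉ 𝒥.idealJ, p = MvPolynomial.monomial β (1 : A)}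

/-- `F` is a marked basis: `(F) ⊕ ⟨N(J)⟩ = P` as `A`-modules. -/
def IsMarkedBasis {A : Type*} [CommRing A] (𝒥 : RedStruct n)
    (F : Term n → MvPolynomial (Fin n) A) : Prop :=
  IsCompl (Submodule.restrictScalars A (Ideal.span (F '' ↑𝒥.M))) (NJSpan 𝒥 A)

/-- A representation of `g` by `σF`: `g = Σ c_(α,η) · x^η f_α` over finitely many
distinct pairs `(α, η)` with `x^α ∈ M`, `x^η ∈ σ_α` and nonzero coefficients. -/
def IsRepr {A : Type*} [CommRing A] (𝒥 : RedStruct n) (σ : Term n → Set (Term n))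
    (F : Term n → MvPolynomial (Fin n) A) (c : (Term n × Term n) →₀ A)
    (g : MvPolynomial (Fin n) A) : Prop :=
  (∀ p ∈ c.support, p.1 ∈ 𝒥.M ∧ p.2 ∈ σ p.1) ∧
    g = c.sum fun p a => MvPolynomial.monomial p.2 a * F p.1

/-- The S-polynomial `S(f_β, f_α) = (lcm(x^α,x^β)/x^α) f_α − (lcm(x^α,x^β)/x^β) f_β`,
written `SPoly F α β`. -/
noncomputable def SPoly {A : Type*} [CommRing A] (F : Term n → MvPolynomial (Fin n) A) (α β : Term n) :
    MvPolynomial (Fin n) A :=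
  MvPolynomial.monomial ((α ⊔ β) - α) (1 : A) * F α -
    MvPolynomial.monomial ((α ⊔ β) - β) (1 : A) * F β

/-- The ordering function `φ` is stable: `φ(x^δ) ≻ φ(x^{δ'})` implies
`φ(x^{δ+ε}) ≻ φ(x^{δ'+ε}) ⪰ φ(x^ε)`. -/
def StableOrderingFn {n : ℕ} {W : Type} (lt : W → W → Prop) (φ : Term n → W) : Prop :=
  ∀ δ δ' ε : Term n, lt (φ δ') (φ δ) →
    lt (φ (δ' + ε)) (φ (δ + ε)) ∧ (lt (φ ε) (φ (δ' + ε)) ∨ φ (δ' + ε) = φ ε)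

/-! A reduction step replaces the term `x^{α+η}` by tail terms of smaller `φ`-value, so the
multiset of `φ`-values of the support decreases for the multiset extension of `≺`: every
polynomial reduces to a reduced one, and `g →_* h` gives `g - h ∈ ⟨τF⟩`. As cones are disjoint,
the `φ`-maximal head in a combination of the `x^η f_α` (`x^η ∈ τ_α`) cannot cancel, so
`⟨τF⟩ ∩ ⟨N(J)⟩ = 0`; hence `(F) ⊕ ⟨N(J)⟩ = P` as soon as `(F) ⊆ ⟨τF⟩`. This inclusion follows
from the S-polynomial condition by well-founded induction on `φ(x^{α+δ})`: if `x^{α+δ}` lies in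
the cone of `x^{α'}` then `x^δ f_α = x^{η'} f_{α'} + x^ε S(f_{α'}, f_α)`, and `S(f_{α'}, f_α)`,
which reduces to `0`, is a combination of generators whose heads lie `φ`-below the lcm;
stability carries this bound over to the products with `x^ε`. -/

open MvPolynomial Relation

lemma Finset.exists_forall_not_rel {ι W : Type*} (r : W → W → Prop) [IsStrictOrder W r]
    (f : ι → W) {s : Finset ι} (hs : s.Nonempty) : ∃ i ∈ s, ∀ j ∈ s, ¬ r (f i) (f j) := by
  let := partialOrderOfSO r
  obtain ⟨i, hi, hmax⟩ := s.exists_maximalFor f hs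
  exact ⟨i, hi, fun j hj h => (hmax hj (le_of_lt h)).not_gt h⟩

lemma Relation.transGen_cutExpand_add {W : Type*} {r : W → W → Prop} (X Z : Multiset W) {y₀ : W}
    (hZ : ∀ z ∈ Z, r z y₀) (Y' : Multiset W) :
    TransGen (CutExpand r) (X + Z) (X + ({y₀} + Y')) := by
  classical
  induction Y' using Multiset.induction_on with
  | empty => simpa using TransGen.single ((cutExpand_add_left X).mpr (cutExpand_singleton hZ))
  | @cons y Y' ih =>
    refine ih.tail ⟨0, y, by simp, ?_⟩
    rw [add_zero, Multiset.ext]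
    intro b
    by_cases hby : b = y <;> simp [Multiset.count_cons, hby]
    ring

lemma Finset.transGen_cutExpand_map {α W : Type*} [DecidableEq α] {r : W → W → Prop}
    (f : α → W) {s s' : Finset α} {x : α} (hx : x ∈ s)
    (h : ∀ y ∈ s', y ∉ s.erase x → r (f y) (f x)) :
    TransGen (CutExpand r) (s'.val.map f) (s.val.map f) := by
  have hs' : s'.val = (s'.filter (· ∈ s.erase x)).val + (s'.filter (· ∉ s.erase x)).val :=
    (Multiset.filter_add_not _ _).symm
  have hsx : (s.erase x).val
      = (s'.filter (· ∈ s.erase x)).val + ((s.erase x).filter (· ∉ s')).val := by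
    rw [← Multiset.filter_add_not (· ∈ s') (s.erase x).val]
    congr 1
    rw [← Finset.filter_val]
    congr 1
    ext y
    simp only [Finset.mem_filter]
    tauto
  have hs : s.val = x ::ₘ (s.erase x).val := by rw [Finset.erase_val, Multiset.cons_erase hx]
  rw [hs', hs, hsx, Multiset.map_cons, Multiset.map_add, Multiset.map_add,
    ← Multiset.singleton_add, add_left_comm]
  refine transGen_cutExpand_add _ _ (fun z hz => ?_) _
  obtain ⟨y, hy, rfl⟩ := Multiset.mem_map.mp hz
  obtain ⟨hys', hyx⟩ := Finset.mem_filter.mp hy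
  exact h y hys' hyx

def RedStruct.IsOrderingFn {n : ℕ} {W : Type*} (𝒥 : RedStruct n) (lt : W → W → Prop)
    (φ : Term n → W) : Prop :=
  ∀ α ∈ 𝒥.M, ∀ γ ∈ 𝒥.lam α, ∀ η ∈ 𝒥.tau α, lt (φ (γ + η)) (φ (α + η))

def RedStruct.tauWithHeadIn {n : ℕ} (𝒥 : RedStruct n) (S : Set (Term n)) (α : Term n) :
    Set (Term n) :=
  {η | η ∈ 𝒥.tau α ∧ α + η ∈ S}

lemma RedStruct.hasDisjointCones.eq_of_add_eq {n : ℕ} {𝒥 : RedStruct n}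
    (hd : 𝒥.hasDisjointCones) {α α' η η' : Term n} (hα : α ∈ 𝒥.M) (hα' : α' ∈ 𝒥.M)
    (hη : η ∈ 𝒥.tau α) (hη' : η' ∈ 𝒥.tau α') (h : α + η = α' + η') : α = α' ∧ η = η' := by
  by_cases hαα' : α = α'
  · subst hαα'
    exact ⟨rfl, add_left_cancel h⟩
  · have hmem : α + η ∈ 𝒥.cone α ∩ 𝒥.cone α' := ⟨⟨η, hη, rfl⟩, ⟨η', hη', h⟩⟩
    simp [hd α hα α' hα' hαα'] at hmem

lemma Ideal.restrictScalars_span_le_of_monomial_mul_mem {σ A : Type*} [CommRing A]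
    {s : Set (MvPolynomial σ A)} {N : Submodule A (MvPolynomial σ A)} (hs : s ⊆ N)
    (hN : ∀ (δ : σ →₀ ℕ), ∀ p ∈ N, monomial δ (1 : A) * p ∈ N) :
    (Ideal.span s).restrictScalars A ≤ N := by
  intro x hx
  induction hx using Submodule.span_induction with
  | mem p hp => exact hs hp
  | zero => exact N.zero_mem
  | add p q _ _ hp hq => exact N.add_mem hp hq
  | smul f p _ hp =>
    rw [smul_eq_mul]
    induction f using MvPolynomial.induction_on' with
    | monomial δ c =>
      rw [show monomial δ c * p = c • (monomial δ 1 * p) by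
        rw [← smul_mul_assoc, smul_monomial, smul_eq_mul, mul_one]]
      exact N.smul_mem c (hN δ p hp)
    | add f g hf hg => rw [add_mul]; exact N.add_mem hf hg

section MarkedSets

variable {n : ℕ} {A : Type*} [CommRing A] {𝒥 : RedStruct n}
  {F : Term n → MvPolynomial (Fin n) A} {W : Type} {lt : W → W → Prop} {φ : Term n → W}

lemma IsMarkedSet.coeff_monomial_mul_head (hF : IsMarkedSet 𝒥 F) {α : Term n} (hα : α ∈ 𝒥.M)
    (η : Term n) (c : A) : coeff (α + η) (monomial η c * F α) = c := by
  rw [coeff_monomial_mul', if_pos le_add_self, add_tsub_cancel_right, (hF α hα).1, mul_one]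

lemma IsMarkedSet.mem_support_monomial_mul (hF : IsMarkedSet 𝒥 F) {α : Term n} (hα : α ∈ 𝒥.M)
    {η t : Term n} {c : A} (ht : t ∈ (monomial η c * F α).support) :
    t = α + η ∨ ∃ γ ∈ 𝒥.lam α, t = γ + η := by
  rw [mem_support_iff, coeff_monomial_mul'] at ht
  split_ifs at ht with hle
  · have hsplit : t = (t - η) + η := (tsub_add_cancel_of_le hle).symm
    rcases (hF α hα).2 _ (right_ne_zero_of_mul ht) with h | h
    · exact .inl (by rw [hsplit, h])
    · exact .inr ⟨t - η, h, hsplit⟩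
  · exact absurd rfl ht

lemma IsMarkedSet.mem_support_sub_monomial_mul (hF : IsMarkedSet 𝒥 F) {α : Term n}
    (hα : α ∈ 𝒥.M) {g : MvPolynomial (Fin n) A} {η t : Term n}
    (ht : t ∈ (g - monomial η (coeff (α + η) g) * F α).support) :
    t ≠ α + η ∧ (t ∈ g.support ∨ ∃ γ ∈ 𝒥.lam α, t = γ + η) := by
  classical
  have hne : t ≠ α + η := by
    rintro rfl
    rw [mem_support_iff, coeff_sub, hF.coeff_monomial_mul_head hα, sub_self] at ht
    exact ht rfl
  refine ⟨hne, ?_⟩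
  rcases Finset.mem_union.mp (support_sub _ _ _ ht) with h | h
  · exact .inl h
  · exact .inr ((hF.mem_support_monomial_mul hα h).resolve_left hne)

lemma Red.transGen_cutExpand (hφ : 𝒥.IsOrderingFn lt φ) (hF : IsMarkedSet 𝒥 F)
    {g h : MvPolynomial (Fin n) A} (hgh : Red 𝒥 F g h) :
    TransGen (CutExpand lt) (h.support.val.map φ) (g.support.val.map φ) := by
  classical
  obtain ⟨α, hα, η, hη, hc, rfl⟩ := hgh
  refine Finset.transGen_cutExpand_map φ (mem_support_iff.mpr hc) fun t ht hterase => ?_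
  obtain ⟨hne, hsupp | ⟨γ, hγ, rfl⟩⟩ := hF.mem_support_sub_monomial_mul hα ht
  · exact absurd (Finset.mem_erase.mpr ⟨hne, hsupp⟩) hterase
  · exact hφ α hα γ hγ η hη

lemma IsMarkedSet.exists_redStar_isReducedPoly (hwf : WellFounded lt)
    (hφ : 𝒥.IsOrderingFn lt φ) (hF : IsMarkedSet 𝒥 F) (g : MvPolynomial (Fin n) A) :
    ∃ l, RedStar 𝒥 F g l ∧ IsReducedPoly 𝒥 l := by
  have hwf' := InvImage.wf (fun g : MvPolynomial (Fin n) A => g.support.val.map φ)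
    hwf.cutExpand.transGen
  induction g using hwf'.induction with
  | _ g ih =>
  by_cases hg : IsReducedPoly 𝒥 g
  · exact ⟨g, .refl, hg⟩
  obtain ⟨β, hβ, hβJ⟩ : ∃ β ∈ g.support, β ∈ 𝒥.idealJ := by
    simpa [IsReducedPoly] using hg
  obtain ⟨α, hα, η, hη, rfl⟩ := (𝒥.cover β).1 hβJ
  have hstep : Red 𝒥 F g (g - monomial η (coeff (α + η) g) * F α) :=
    ⟨α, hα, η, hη, mem_support_iff.mp hβ, rfl⟩
  obtain ⟨l, hl, hlred⟩ := ih _ (hstep.transGen_cutExpand hφ hF)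
  exact ⟨l, .head hstep hl, hlred⟩

lemma tauSpan_mono {σ σ' : Term n → Set (Term n)} (h : ∀ α, σ α ⊆ σ' α) :
    tauSpan 𝒥 σ F ≤ tauSpan 𝒥 σ' F :=
  Submodule.span_mono fun _ ⟨α, hα, η, hη, hp⟩ => ⟨α, hα, η, h α hη, hp⟩

lemma monomial_mul_mem_tauSpan {σ : Term n → Set (Term n)} {α η : Term n} (hα : α ∈ 𝒥.M)
    (hη : η ∈ σ α) (c : A) :
    monomial η c * F α ∈ tauSpan 𝒥 σ F := by
  have h : monomial η c * F α = c • (monomial η (1 : A) * F α) := by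
    rw [← smul_mul_assoc, smul_monomial, smul_eq_mul, mul_one]
  rw [h]
  exact Submodule.smul_mem _ _ (Submodule.subset_span ⟨α, hα, η, hη, rfl⟩)

lemma RedStar.sub_mem_tauSpan_of_support_subset (hF : IsMarkedSet 𝒥 F) {S : Set (Term n)}
    (hS : ∀ α ∈ 𝒥.M, ∀ η ∈ 𝒥.tau α, ∀ γ ∈ 𝒥.lam α, α + η ∈ S → γ + η ∈ S)
    {g h : MvPolynomial (Fin n) A} (hgh : RedStar 𝒥 F g h) (hg : ↑g.support ⊆ S) :
    g - h ∈ tauSpan 𝒥 (𝒥.tauWithHeadIn S) F := by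
  induction hgh using ReflTransGen.head_induction_on with
  | refl => simp
  | @head g g₁ hstep _ ih =>
    obtain ⟨α, hα, η, hη, hc, rfl⟩ := hstep
    have hαη : α + η ∈ S := hg (mem_support_iff.mpr hc)
    have hg₁ : ↑(g - monomial η (coeff (α + η) g) * F α).support ⊆ S := by
      intro t ht
      obtain ⟨-, hsupp | ⟨γ, hγ, rfl⟩⟩ := hF.mem_support_sub_monomial_mul hα ht
      · exact hg hsupp
      · exact hS α hα η hη γ hγ hαη
    rw [show g - h = monomial η (coeff (α + η) g) * F α
      + (g - monomial η (coeff (α + η) g) * F α - h) by ring]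
    exact Submodule.add_mem _
      (monomial_mul_mem_tauSpan (σ := 𝒥.tauWithHeadIn S) hα ⟨hη, hαη⟩ _) (ih hg₁)

lemma RedStar.sub_mem_tauSpan (hF : IsMarkedSet 𝒥 F) {g h : MvPolynomial (Fin n) A}
    (hgh : RedStar 𝒥 F g h) : g - h ∈ tauSpan 𝒥 𝒥.tau F :=
  tauSpan_mono (fun _ _ h => h.1)
    (hgh.sub_mem_tauSpan_of_support_subset hF (S := Set.univ) (by simp) (by simp))

lemma tauSpan_le_ideal (σ : Term n → Set (Term n)) :
    tauSpan 𝒥 σ F ≤ (Ideal.span (F '' 𝒥.M)).restrictScalars A :=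
  Submodule.span_le.mpr <| by
    rintro _ ⟨α, hα, η, -, rfl⟩
    exact Ideal.mul_mem_left _ _ (Ideal.subset_span ⟨α, hα, rfl⟩)

lemma mem_NJSpan_iff {l : MvPolynomial (Fin n) A} : l ∈ NJSpan 𝒥 A ↔ IsReducedPoly 𝒥 l := by
  classical
  constructor
  · intro hl
    induction hl using Submodule.span_induction with
    | mem p hp =>
      obtain ⟨β, hβ, rfl⟩ := hp
      intro t ht
      rwa [Finset.mem_singleton.mp (support_monomial_subset ht)]
    | zero => simp [IsReducedPoly]
    | add p q _ _ hp hq =>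
      intro t ht
      rcases Finset.mem_union.mp (support_add ht) with h | h
      exacts [hp t h, hq t h]
    | smul c p _ hp => exact fun t ht => hp t (support_smul ht)
  · intro hl
    rw [as_sum l]
    refine Submodule.sum_mem _ fun β hβ => ?_
    rw [show monomial β (coeff β l) = coeff β l • monomial β (1 : A) by
      rw [smul_monomial, smul_eq_mul, mul_one]]
    exact Submodule.smul_mem _ _ (Submodule.subset_span ⟨β, hl β hβ, rfl⟩)

lemma tauF_eq_range (σ : Term n → Set (Term n)) :
    tauF 𝒥 σ F = Set.range fun i : {p : Term n × Term n // p.1 ∈ 𝒥.M ∧ p.2 ∈ σ p.1} =>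
      monomial i.1.2 (1 : A) * F i.1.1 := by
  ext p
  constructor
  · rintro ⟨α, hα, η, hη, rfl⟩
    exact ⟨⟨(α, η), hα, hη⟩, rfl⟩
  · rintro ⟨⟨⟨α, η⟩, hα, hη⟩, rfl⟩
    exact ⟨α, hα, η, hη, rfl⟩

lemma eq_zero_of_mem_tauSpan_of_isReducedPoly [IsStrictOrder W lt] (hφ : 𝒥.IsOrderingFn lt φ)
    (hd : 𝒥.hasDisjointCones) (hF : IsMarkedSet 𝒥 F) {g : MvPolynomial (Fin n) A}
    (hg : g ∈ tauSpan 𝒥 𝒥.tau F) (hgred : IsReducedPoly 𝒥 g) : g = 0 := by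
  classical
  rw [tauSpan, tauF_eq_range, Finsupp.mem_span_range_iff_exists_finsupp] at hg
  obtain ⟨c, rfl⟩ := hg
  rcases c.support.eq_empty_or_nonempty with hc | hc
  · simp [Finsupp.sum, hc]
  let head (i : {p : Term n × Term n // p.1 ∈ 𝒥.M ∧ p.2 ∈ 𝒥.tau p.1}) : Term n := i.1.1 + i.1.2
  obtain ⟨i₀, hi₀, hmax⟩ := Finset.exists_forall_not_rel lt (φ ∘ head) hc
  have hother : ∀ i ∈ c.support, i ≠ i₀ →
      coeff (head i₀) (c i • (monomial i.1.2 (1 : A) * F i.1.1)) = 0 := by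
    intro i hi hne
    have hnot : head i₀ ∉ (monomial i.1.2 (1 : A) * F i.1.1).support := by
      intro h
      rcases hF.mem_support_monomial_mul i.2.1 h with h | ⟨γ, hγ, h⟩
      · obtain ⟨h₁, h₂⟩ := hd.eq_of_add_eq i.2.1 i₀.2.1 i.2.2 i₀.2.2 h.symm
        exact hne (Subtype.ext (Prod.ext h₁ h₂))
      · have hlt := hφ _ i.2.1 γ hγ _ i.2.2
        rw [← h] at hlt
        exact hmax i hi hlt
    rw [coeff_smul, notMem_support_iff.mp hnot, smul_zero]
  have hcoeff : coeff (head i₀) (c.sum fun i a => a • (monomial i.1.2 (1 : A) * F i.1.1))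
      = c i₀ := by
    rw [Finsupp.sum, coeff_sum, Finset.sum_eq_single i₀ hother (absurd hi₀), coeff_smul,
      hF.coeff_monomial_mul_head i₀.2.1, smul_eq_mul, mul_one]
  refine absurd ⟨i₀.1.1, i₀.2.1, i₀.1.2, rfl⟩ (hgred (head i₀) ?_)
  rw [mem_support_iff, hcoeff]
  exact Finsupp.mem_support_iff.mp hi₀

variable (𝒥 F) in
/-- Condition (b) of the criterion. -/
def SPolysReduceToZero : Prop :=
  ∀ α ∈ 𝒥.M, ∀ α' ∈ 𝒥.M, α ⊔ α' ∈ 𝒥.cone α' →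
    ∀ l : MvPolynomial (Fin n) A, IsReducedPoly 𝒥 l → RedStar 𝒥 F (SPoly F α α') l → l = 0

lemma monomial_mul_eq_add_SPoly {α α' δ η' : Term n} (h : α + δ = α' + η') :
    monomial δ (1 : A) * F α
      = monomial η' 1 * F α' + monomial (α + δ - α ⊔ α') 1 * SPoly F α α' := by
  have hL : α ⊔ α' ≤ α + δ := sup_le le_self_add (h ▸ le_self_add)
  rw [SPoly, mul_sub, ← mul_assoc, ← mul_assoc, monomial_mul, monomial_mul, one_mul,
    tsub_add_tsub_cancel hL le_sup_left, tsub_add_tsub_cancel hL le_sup_right,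
    add_tsub_cancel_left, h, add_tsub_cancel_left]
  ring

lemma monomial_mul_mem_of_mem_tauSpan {σ : Term n → Set (Term n)}
    {N : Submodule A (MvPolynomial (Fin n) A)} (δ : Term n)
    (hN : ∀ α ∈ 𝒥.M, ∀ η ∈ σ α, monomial (δ + η) (1 : A) * F α ∈ N)
    {p : MvPolynomial (Fin n) A} (hp : p ∈ tauSpan 𝒥 σ F) : monomial δ (1 : A) * p ∈ N := by
  refine (Submodule.span_le (p := N.comap (LinearMap.mulLeft A (monomial δ 1)))).mpr ?_ hp
  rintro _ ⟨α, hα, η, hη, rfl⟩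
  simpa only [SetLike.mem_coe, Submodule.mem_comap, LinearMap.mulLeft_apply, ← mul_assoc,
    monomial_mul, one_mul] using hN α hα η hη

lemma SPoly_support_lt (hφ : 𝒥.IsOrderingFn lt φ) (hstab : StableOrderingFn lt φ)
    (hF : IsMarkedSet 𝒥 F) {α α' : Term n} (hα : α ∈ 𝒥.M)
    (h0 : 0 ∈ 𝒥.tau α) (hα' : α' ∈ 𝒥.M) (hL : α ⊔ α' ∈ 𝒥.cone α') :
    ∀ t ∈ (SPoly F α α').support, lt (φ t) (φ (α ⊔ α')) := by
  classical
  obtain ⟨η', hη', hLη'⟩ := hL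
  have hαL : α + (α ⊔ α' - α) = α ⊔ α' := add_tsub_cancel_of_le le_sup_left
  have hη'L : α ⊔ α' - α' = η' := by rw [hLη', add_tsub_cancel_left]
  have hP : coeff (α ⊔ α') (monomial (α ⊔ α' - α) (1 : A) * F α) = 1 := by
    simpa only [hαL] using hF.coeff_monomial_mul_head hα (α ⊔ α' - α) (1 : A)
  have hQ : coeff (α ⊔ α') (monomial (α ⊔ α' - α') (1 : A) * F α') = 1 := by
    rw [hη'L, hLη']
    exact hF.coeff_monomial_mul_head hα' η' 1
  intro t ht
  have htL : t ≠ α ⊔ α' := by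
    rintro rfl
    rw [mem_support_iff, SPoly, coeff_sub, hP, hQ, sub_self] at ht
    exact ht rfl
  rcases Finset.mem_union.mp (support_sub _ _ _ ht) with hPt | hQt
  · obtain rfl | ⟨γ, hγ, rfl⟩ := hF.mem_support_monomial_mul hα hPt
    · exact absurd hαL htL
    · have hγα : lt (φ γ) (φ α) := by simpa using hφ α hα γ hγ 0 h0
      simpa only [hαL] using (hstab α γ (α ⊔ α' - α) hγα).1
  · obtain rfl | ⟨γ, hγ, rfl⟩ := hF.mem_support_monomial_mul hα' hQt
    · exact absurd (by rw [hη'L, hLη']) htL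
    · rw [hη'L, hLη']
      exact hφ α' hα' γ hγ η' hη'

lemma SPoly_mem_tauSpan_below [IsTrans W lt] (hwf : WellFounded lt) (hφ : 𝒥.IsOrderingFn lt φ)
    (hstab : StableOrderingFn lt φ) (hF : IsMarkedSet 𝒥 F) (hb : SPolysReduceToZero 𝒥 F)
    {α α' : Term n} (hα : α ∈ 𝒥.M) (h0 : 0 ∈ 𝒥.tau α) (hα' : α' ∈ 𝒥.M)
    (hL : α ⊔ α' ∈ 𝒥.cone α') :
    SPoly F α α' ∈ tauSpan 𝒥 (𝒥.tauWithHeadIn {t | lt (φ t) (φ (α ⊔ α'))}) F := by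
  obtain ⟨l, hSl, hl⟩ := hF.exists_redStar_isReducedPoly hwf hφ (SPoly F α α')
  obtain rfl := hb α hα α' hα' hL l hl hSl
  have h := hSl.sub_mem_tauSpan_of_support_subset hF (S := {t | lt (φ t) (φ (α ⊔ α'))})
    (fun β hβ η hη γ hγ hβη => _root_.trans (hφ β hβ γ hγ η hη) hβη)
    fun t ht => SPoly_support_lt hφ hstab hF hα h0 hα' hL t ht
  rwa [sub_zero] at h

lemma monomial_mul_mem_tauSpan_of_zero_mem [IsTrans W lt] (hwf : WellFounded lt)
    (hφ : 𝒥.IsOrderingFn lt φ) (hstab : StableOrderingFn lt φ) (hF : IsMarkedSet 𝒥 F)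
    (hb : SPolysReduceToZero 𝒥 F) {α : Term n} (hα : α ∈ 𝒥.M) (h0 : 0 ∈ 𝒥.tau α) (δ : Term n) :
    monomial δ (1 : A) * F α ∈ tauSpan 𝒥 𝒥.tau F := by
  obtain ⟨β, hβ⟩ : ∃ β, α + δ = β := ⟨_, rfl⟩
  induction β using (InvImage.wf φ hwf).induction generalizing α δ with
  | _ β ih =>
  subst hβ
  obtain ⟨α', hα', η', hη', hδη'⟩ := (𝒥.cover _).1 ⟨α, hα, δ, rfl⟩
  have hLδ : α ⊔ α' ≤ α + δ := sup_le le_self_add (hδη' ▸ le_self_add)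
  have hL : α ⊔ α' ∈ 𝒥.cone α' := by
    refine ⟨α ⊔ α' - α', 𝒥.tau_orderIdeal α' hα' η' hη' _ ?_,
      (add_tsub_cancel_of_le le_sup_right).symm⟩
    calc α ⊔ α' - α' ≤ α + δ - α' := tsub_le_tsub_right hLδ α'
      _ = η' := by rw [hδη', add_tsub_cancel_left]
  rw [monomial_mul_eq_add_SPoly hδη']
  refine Submodule.add_mem _ (Submodule.subset_span ⟨α', hα', η', hη', rfl⟩)
    (monomial_mul_mem_of_mem_tauSpan _ ?_ (SPoly_mem_tauSpan_below hwf hφ hstab hF hb hα h0 hα' hL))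
  rintro α₂ hα₂ η₂ ⟨hη₂, hlt⟩
  refine ih _ ?_ hα₂ (𝒥.tau_orderIdeal α₂ hα₂ η₂ hη₂ 0 zero_le) _ rfl
  have h := (hstab _ _ (α + δ - α ⊔ α') hlt).1
  rwa [add_tsub_cancel_of_le hLδ, add_right_comm, add_assoc] at h

lemma monomial_mul_mem_tauSpan_of_mem_tauSpan [IsTrans W lt] (hwf : WellFounded lt)
    (hφ : 𝒥.IsOrderingFn lt φ) (hstab : StableOrderingFn lt φ) (hF : IsMarkedSet 𝒥 F)
    (hb : SPolysReduceToZero 𝒥 F) (δ : Term n) {p : MvPolynomial (Fin n) A}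
    (hp : p ∈ tauSpan 𝒥 𝒥.tau F) :
    monomial δ (1 : A) * p ∈ tauSpan 𝒥 𝒥.tau F :=
  monomial_mul_mem_of_mem_tauSpan δ (fun α hα η hη => monomial_mul_mem_tauSpan_of_zero_mem
    hwf hφ hstab hF hb hα (𝒥.tau_orderIdeal α hα η hη 0 zero_le) _) hp

/-- `f_α = x^{η''} f_{α''} + S(f_{α''}, f_α)` for any cone `cone(x^{α''}) ∋ x^α`, so this needs
no assumption on `τ_α`. -/
lemma mem_tauSpan_of_mem_M [IsTrans W lt] (hwf : WellFounded lt)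
    (hφ : 𝒥.IsOrderingFn lt φ) (hstab : StableOrderingFn lt φ)
    (hF : IsMarkedSet 𝒥 F) (hb : SPolysReduceToZero 𝒥 F) {α : Term n} (hα : α ∈ 𝒥.M) :
    F α ∈ tauSpan 𝒥 𝒥.tau F := by
  obtain ⟨α'', hα'', η'', hη'', hαη''⟩ := (𝒥.cover α).1 ⟨α, hα, 0, (add_zero α).symm⟩
  have hL : α ⊔ α'' = α := sup_eq_left.mpr (hαη'' ▸ le_self_add)
  obtain ⟨l, hSl, hl⟩ := hF.exists_redStar_isReducedPoly hwf hφ (SPoly F α α'')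
  obtain rfl := hb α hα α'' hα'' (by rw [hL]; exact ⟨η'', hη'', hαη''⟩) l hl hSl
  have hS : SPoly F α α'' ∈ tauSpan 𝒥 𝒥.tau F := by simpa using hSl.sub_mem_tauSpan hF
  have hdecomp := monomial_mul_eq_add_SPoly (F := F) (δ := 0) ((add_zero α).trans hαη'')
  rw [monomial_zero', C_1, one_mul] at hdecomp
  rw [hdecomp]
  exact Submodule.add_mem _ (Submodule.subset_span ⟨α'', hα'', η'', hη'', rfl⟩)
    (monomial_mul_mem_tauSpan_of_mem_tauSpan hwf hφ hstab hF hb _ hS)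

lemma ideal_le_tauSpan [IsTrans W lt] (hwf : WellFounded lt) (hφ : 𝒥.IsOrderingFn lt φ)
    (hstab : StableOrderingFn lt φ) (hF : IsMarkedSet 𝒥 F) (hb : SPolysReduceToZero 𝒥 F) :
    (Ideal.span (F '' 𝒥.M)).restrictScalars A ≤ tauSpan 𝒥 𝒥.tau F :=
  Ideal.restrictScalars_span_le_of_monomial_mul_mem
    (by rintro _ ⟨α, hα, rfl⟩; exact mem_tauSpan_of_mem_M hwf hφ hstab hF hb hα)
    fun δ _ hp => monomial_mul_mem_tauSpan_of_mem_tauSpan hwf hφ hstab hF hb δ hp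

lemma isMarkedBasis_of_SPolysReduceToZero [IsStrictOrder W lt] (hwf : WellFounded lt)
    (hφ : 𝒥.IsOrderingFn lt φ) (hstab : StableOrderingFn lt φ) (hd : 𝒥.hasDisjointCones)
    (hF : IsMarkedSet 𝒥 F) (hb : SPolysReduceToZero 𝒥 F) : IsMarkedBasis 𝒥 F := by
  constructor
  · refine Submodule.disjoint_def.mpr fun g hgI hgN => ?_
    exact eq_zero_of_mem_tauSpan_of_isReducedPoly hφ hd hF
      (ideal_le_tauSpan hwf hφ hstab hF hb hgI) (mem_NJSpan_iff.mp hgN)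
  · rw [codisjoint_iff, eq_top_iff]
    intro g _
    obtain ⟨l, hgl, hl⟩ := hF.exists_redStar_isReducedPoly hwf hφ g
    exact Submodule.mem_sup.mpr ⟨g - l, tauSpan_le_ideal _ (hgl.sub_mem_tauSpan hF), l,
      mem_NJSpan_iff.mpr hl, sub_add_cancel g l⟩

lemma IsMarkedBasis.eq_zero_of_redStar (hmb : IsMarkedBasis 𝒥 F) (hF : IsMarkedSet 𝒥 F)
    {g l : MvPolynomial (Fin n) A} (hg : g ∈ Ideal.span (F '' 𝒥.M)) (hgl : RedStar 𝒥 F g l)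
    (hl : IsReducedPoly 𝒥 l) : l = 0 := by
  have hlI : l ∈ Ideal.span (F '' 𝒥.M) := by
    rw [← sub_sub_cancel g l]
    exact Ideal.sub_mem _ hg (tauSpan_le_ideal _ (hgl.sub_mem_tauSpan hF))
  exact Submodule.disjoint_def.mp hmb.disjoint l hlI (mem_NJSpan_iff.mpr hl)

lemma IsMarkedBasis.sPolysReduceToZero (hmb : IsMarkedBasis 𝒥 F) (hF : IsMarkedSet 𝒥 F) :
    SPolysReduceToZero 𝒥 F := fun α hα α' hα' _ _ hl hSl =>
  hmb.eq_zero_of_redStar hF (Ideal.sub_mem _ (Ideal.mul_mem_left _ _ (Ideal.subset_span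
    ⟨α, hα, rfl⟩)) (Ideal.mul_mem_left _ _ (Ideal.subset_span ⟨α', hα', rfl⟩))) hSl hl

/-- `S(f_{α'}, f_α)` is obtained from `x^γ f_α` by the one reduction step that cancels the
lcm with `x^{η₀} f_{α'}`. -/
lemma SPolysReduceToZero.of_monomial_mul (hF : IsMarkedSet 𝒥 F)
    (hc : ∀ α ∈ 𝒥.M, ∀ α' ∈ 𝒥.M, ∀ γ : Term n, γ + α = α ⊔ α' → α ⊔ α' ∈ 𝒥.cone α' →
      ∀ l : MvPolynomial (Fin n) A, IsReducedPoly 𝒥 l →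
        RedStar 𝒥 F (monomial γ (1 : A) * F α) l → l = 0) :
    SPolysReduceToZero 𝒥 F := by
  intro α hα α' hα' hL l hl hSl
  nontriviality A
  obtain ⟨η₀, hη₀, hLη₀⟩ := hL
  have hcoeff : coeff (α' + η₀) (monomial (α ⊔ α' - α) (1 : A) * F α) = 1 := by
    rw [← hLη₀]
    simpa only [add_tsub_cancel_of_le le_sup_left]
      using hF.coeff_monomial_mul_head hα (α ⊔ α' - α) (1 : A)
  have hη₀L : α ⊔ α' - α' = η₀ := by rw [hLη₀, add_tsub_cancel_left]
  refine hc α hα α' hα' _ (tsub_add_cancel_of_le le_sup_left) ⟨η₀, hη₀, hLη₀⟩ l hl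
    (.head ⟨α', hα', η₀, hη₀, by simp [hcoeff], ?_⟩ hSl)
  rw [hcoeff, SPoly, hη₀L]

end MarkedSets

/-- over a noetherian RS with disjoint cones whose ordering function is
stable, `F` is a marked basis iff the relevant S-polynomials reduce to `0`, iff the
corresponding multiples `x^γ f_α` reduce to `0`. -/
theorem stmt15 {n : ℕ} {A : Type} [CommRing A] (𝒥 : RedStruct n)
    (W : Type) (lt : W → W → Prop) (φ : Term n → W)
    (hso : IsStrictOrder W lt) (hwf : WellFounded lt)
    (hφ : ∀ α ∈ 𝒥.M, ∀ γ ∈ 𝒥.lam α, ∀ η ∈ 𝒥.tau α, lt (φ (γ + η)) (φ (α + η)))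
    (hstab : StableOrderingFn lt φ) (hd : 𝒥.hasDisjointCones)
    (F : Term n → MvPolynomial (Fin n) A) (hF : IsMarkedSet 𝒥 F) :
    (IsMarkedBasis 𝒥 F ↔
      ∀ α ∈ 𝒥.M, ∀ α' ∈ 𝒥.M, (α ⊔ α') ∈ 𝒥.cone α' →
        ∀ l : MvPolynomial (Fin n) A, IsReducedPoly 𝒥 l →
          RedStar 𝒥 F (SPoly F α α') l → l = 0) ∧
    (IsMarkedBasis 𝒥 F ↔
      ∀ α ∈ 𝒥.M, ∀ α' ∈ 𝒥.M, ∀ γ : Term n, γ + α = α ⊔ α' → (α ⊔ α') ∈ 𝒥.cone α' →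
        ∀ l : MvPolynomial (Fin n) A, IsReducedPoly 𝒥 l →
          RedStar 𝒥 F (MvPolynomial.monomial γ (1 : A) * F α) l → l = 0) := by
  have := hso
  have hbasis : SPolysReduceToZero 𝒥 F → IsMarkedBasis 𝒥 F :=
    isMarkedBasis_of_SPolysReduceToZero hwf hφ hstab hd hF
  refine ⟨⟨fun hmb => hmb.sPolysReduceToZero hF, hbasis⟩,
    ⟨?_, fun hc => hbasis (.of_monomial_mul hF hc)⟩⟩
  intro hmb α hα α' _ γ _ _ l hl hγl
  exact hmb.eq_zero_of_redStar hF (Ideal.mul_mem_left _ _ (Ideal.subset_span ⟨α, hα, rfl⟩)) hγl hl
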